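/- arXiv:0905.3447 — 3 statements merged into one kernel-verified Lean document; each statement's English description precedes it below -/
import Mathlib

section
/- Let Γ_{h,Σ} be the r-dimensional Gaussian measure with mean h and nonsingular covariance Σ. Then for ε ∈ (0,1): Γ_{h,Σ}({ξ : ‖ξ − h‖_{Σ⁻¹} > √(r/(1−ε))}) ≤ exp(−rε²/4) and Γ_{h,Σ}({ξ : ‖ξ − h‖_{Σ⁻¹} < √(r(1−ε))}) ≤ exp(−rε²/4). -/
/-!
Write `ξ = h + Σ^{1/2} z` with `z` standard Gaussian in `ℝʳ`. Then `‖ξ - h‖²_{Σ⁻¹} = |z|²` is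
χ²-distributed with moment generating function `t ↦ (1 - 2t)^{-r/2}` for `t < 1/2`. Chernoff's
bound with `t = ε/2` for the upper tail and `t = -ε/(2(1-ε))` for the lower tail, combined with
`log y ≤ (y - y⁻¹)/2` for `y ≥ 1` and `log (1 - ε) ≤ -ε - ε²/2`, gives `exp (-rε²/4)` in both cases.
-/

open MeasureTheory ProbabilityTheory
open scoped Matrix BigOperators

noncomputable def stdGaussPi (r : ℕ) : Measure (Fin r → ℝ) :=
  Measure.pi fun _ => gaussianReal 0 1

/-- The `r`-dimensional Gaussian measure with mean `h` and covariance `Σ`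
(realized as the law of `h + Σ^{1/2} Z` with `Z` standard Gaussian). -/
noncomputable def gaussianVec {r : ℕ} (h : Fin r → ℝ)
    (Shalf : Matrix (Fin r) (Fin r) ℝ) : Measure (Fin r → ℝ) :=
  (stdGaussPi r).map (fun z => h + Shalf.mulVec z)

open Real

theorem Real.log_le_sub_inv_div_two {x : ℝ} (hx : 1 ≤ x) : log x ≤ (x - x⁻¹) / 2 :=
  calc log x ≤ sinh (log x) := self_le_sinh_iff.2 (log_nonneg hx)
    _ = (x - x⁻¹) / 2 := by rw [sinh_eq, exp_neg, exp_log (by linarith)]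

theorem Real.log_one_sub_le {x : ℝ} (h0 : 0 ≤ x) (h1 : x < 1) :
    log (1 - x) ≤ -x - x ^ 2 / 2 := by
  have h := sum_le_hasSum (Finset.range 2) (fun n _ => by positivity)
    (hasSum_pow_div_log_of_abs_lt_one (abs_lt.2 ⟨by linarith, h1⟩))
  norm_num [Finset.sum_range_succ] at h
  linarith

theorem Matrix.mulVec_dotProduct_mul_transpose_inv_mulVec {n K : Type*} [Fintype n]
    [DecidableEq n] [CommRing K] {A : Matrix n n K} (hA : IsUnit A.det) (z : n → K) :
    (A *ᵥ z) ⬝ᵥ (A * Aᵀ)⁻¹ *ᵥ (A *ᵥ z) = z ⬝ᵥ z := by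
  have hAt : IsUnit Aᵀ.det := by rwa [det_transpose]
  rw [mul_inv_rev, mulVec_mulVec, mul_assoc, nonsing_inv_mul _ hA, mul_one, dotProduct_comm,
    dotProduct_mulVec, ← mulVec_transpose, mulVec_mulVec, mul_nonsing_inv _ hAt, one_mulVec]

theorem integral_exp_mul_sq_gaussianReal {s : ℝ} (hs : s < 1 / 2) :
    ∫ x, exp (s * x ^ 2) ∂gaussianReal 0 1 = (1 - 2 * s) ^ (-(1 / 2 : ℝ)) := by
  have hpdf : ∀ x, gaussianPDFReal 0 1 x * exp (s * x ^ 2)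
      = (√(2 * π))⁻¹ * exp (-(1 / 2 - s) * x ^ 2) := fun x => by
    simp only [gaussianPDFReal, NNReal.coe_one, mul_one, sub_zero, mul_assoc, ← exp_add]
    ring_nf
  simp_rw [integral_gaussianReal_eq_integral_smul one_ne_zero, smul_eq_mul, hpdf,
    integral_const_mul, integral_gaussian]
  rw [rpow_neg (by linarith), ← sqrt_eq_rpow, ← sqrt_inv, ← sqrt_inv, ← sqrt_mul (by positivity)]
  congr 1
  have : 0 < 1 / 2 - s := by linarith
  field_simp

section SumSq

variable (ι : Type*) [Fintype ι]

theorem mgf_sum_sq_pi_gaussianReal {s : ℝ} (hs : s < 1 / 2) :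
    mgf (fun z : ι → ℝ => ∑ i, z i ^ 2) (Measure.pi fun _ => gaussianReal 0 1) s
      = (1 - 2 * s) ^ (-(Fintype.card ι / 2 : ℝ)) := by
  simp_rw [mgf, Finset.mul_sum, exp_sum]
  rw [integral_fintype_prod_eq_pow (fun x => exp (s * x ^ 2)),
    integral_exp_mul_sq_gaussianReal hs, ← rpow_mul_natCast (by linarith)]
  ring_nf

theorem integrable_exp_mul_sum_sq_pi_gaussianReal {s : ℝ} (hs : s < 1 / 2) :
    Integrable (fun z : ι → ℝ => exp (s * ∑ i, z i ^ 2)) (Measure.pi fun _ => gaussianReal 0 1) :=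
  .of_integral_ne_zero <| by
    rw [← mgf, mgf_sum_sq_pi_gaussianReal ι hs]
    exact (rpow_pos_of_pos (by linarith) _).ne'

theorem pi_gaussianReal_sum_sq_ge_le {t : ℝ} (a : ℝ) (ht0 : 0 ≤ t) (ht : t < 1 / 2) :
    (Measure.pi fun _ : ι => gaussianReal 0 1) {z | a ≤ ∑ i, z i ^ 2}
      ≤ ENNReal.ofReal (exp (-t * a) * (1 - 2 * t) ^ (-(Fintype.card ι / 2 : ℝ))) := by
  rw [← mgf_sum_sq_pi_gaussianReal ι ht, ← ofReal_measureReal]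
  exact ENNReal.ofReal_le_ofReal <|
    measure_ge_le_exp_mul_mgf a ht0 (integrable_exp_mul_sum_sq_pi_gaussianReal ι ht)

theorem pi_gaussianReal_sum_sq_le_le {t : ℝ} (b : ℝ) (ht : t ≤ 0) :
    (Measure.pi fun _ : ι => gaussianReal 0 1) {z | ∑ i, z i ^ 2 ≤ b}
      ≤ ENNReal.ofReal (exp (-t * b) * (1 - 2 * t) ^ (-(Fintype.card ι / 2 : ℝ))) := by
  have ht' : t < 1 / 2 := by linarith
  rw [← mgf_sum_sq_pi_gaussianReal ι ht', ← ofReal_measureReal]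
  exact ENNReal.ofReal_le_ofReal <|
    measure_le_le_exp_mul_mgf b ht (integrable_exp_mul_sum_sq_pi_gaussianReal ι ht')

end SumSq

theorem stdGaussPi_sum_sq_ge_le (r : ℕ) {ε : ℝ} (h0 : 0 < ε) (h1 : ε < 1) :
    stdGaussPi r {z | r / (1 - ε) ≤ ∑ i, z i ^ 2} ≤ ENNReal.ofReal (exp (-r * ε ^ 2 / 4)) := by
  refine (pi_gaussianReal_sum_sq_ge_le (Fin r) _ (t := ε / 2) (by linarith) (by linarith)).trans
    (ENNReal.ofReal_le_ofReal ?_)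
  have hpos : 0 < 1 - ε := by linarith
  have hinv : 1 ≤ (1 - ε)⁻¹ := one_le_inv_iff₀.2 ⟨hpos, by linarith⟩
  have hlog := log_le_sub_inv_div_two hinv
  rw [log_inv, inv_inv] at hlog
  rw [Fintype.card_fin, show 1 - 2 * (ε / 2) = 1 - ε by ring, rpow_def_of_pos hpos, ← exp_add,
    exp_le_exp, div_eq_mul_inv (r : ℝ)]
  have hr : (0 : ℝ) ≤ r := r.cast_nonneg
  calc -(ε / 2) * (r * (1 - ε)⁻¹) + log (1 - ε) * -(r / 2)
      ≤ -(ε / 2) * (r * (1 - ε)⁻¹) + ((1 - ε)⁻¹ - (1 - ε)) / 2 * (r / 2) := by nlinarith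
    _ = -r * ε ^ 2 / 4 * (1 - ε)⁻¹ := by
      linear_combination (r / 4 * (1 - ε)) * inv_mul_cancel₀ hpos.ne'
    _ ≤ -r * ε ^ 2 / 4 := by nlinarith [mul_nonneg (mul_nonneg hr (sq_nonneg ε)) (sub_nonneg.2 hinv)]

theorem stdGaussPi_sum_sq_le_le (r : ℕ) {ε : ℝ} (h0 : 0 < ε) (h1 : ε < 1) :
    stdGaussPi r {z | ∑ i, z i ^ 2 ≤ r * (1 - ε)} ≤ ENNReal.ofReal (exp (-r * ε ^ 2 / 4)) := by
  have hpos : 0 < 1 - ε := by linarith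
  have ht : 0 ≤ ε / (2 * (1 - ε)) := by positivity
  refine (pi_gaussianReal_sum_sq_le_le (Fin r) _ (t := -(ε / (2 * (1 - ε)))) (by linarith)).trans
    (ENNReal.ofReal_le_ofReal ?_)
  have hlog := log_one_sub_le h0.le h1
  rw [Fintype.card_fin, show 1 - 2 * -(ε / (2 * (1 - ε))) = (1 - ε)⁻¹ by field_simp; ring,
    rpow_def_of_pos (inv_pos.2 hpos), log_inv, ← exp_add, exp_le_exp,
    show -(-(ε / (2 * (1 - ε)))) * (r * (1 - ε)) = r * ε / 2 by field_simp]
  have hr : (0 : ℝ) ≤ r := r.cast_nonneg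
  nlinarith

theorem gaussianVec_mahalanobis_mem {r : ℕ} (h : Fin r → ℝ) {A : Matrix (Fin r) (Fin r) ℝ}
    (hA : IsUnit A.det) {S : Set ℝ} (hS : MeasurableSet S) :
    gaussianVec h A {ξ | (ξ - h) ⬝ᵥ (A * Aᵀ)⁻¹ *ᵥ (ξ - h) ∈ S}
      = stdGaussPi r {z | ∑ i, z i ^ 2 ∈ S} := by
  have hq : Measurable fun ξ : Fin r → ℝ => (ξ - h) ⬝ᵥ (A * Aᵀ)⁻¹ *ᵥ (ξ - h) := by fun_prop
  refine (Measure.map_apply (by fun_prop) (hq hS)).trans ?_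
  congr 1
  ext z
  simp only [Set.mem_preimage, add_sub_cancel_left,
    Matrix.mulVec_dotProduct_mul_transpose_inv_mulVec hA]
  simp only [dotProduct, sq, Set.mem_ofPred_eq]

theorem gaussian_concentration_general
    {r : ℕ} (h : Fin r → ℝ) (Sig Shalf : Matrix (Fin r) (Fin r) ℝ)
    (hShalf : Shalf.PosDef) (hsq : Shalf * Shalf = Sig)
    (ε : ℝ) (hε : ε ∈ Set.Ioo (0:ℝ) 1) :
    gaussianVec h Shalf
        {ξ : Fin r → ℝ | Real.sqrt ((ξ - h) ⬝ᵥ Sig⁻¹.mulVec (ξ - h)) >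
          Real.sqrt ((r : ℝ) / (1 - ε))}
      ≤ ENNReal.ofReal (Real.exp (-(r : ℝ) * ε ^ 2 / 4)) ∧
    gaussianVec h Shalf
        {ξ : Fin r → ℝ | Real.sqrt ((ξ - h) ⬝ᵥ Sig⁻¹.mulVec (ξ - h)) <
          Real.sqrt ((r : ℝ) * (1 - ε))}
      ≤ ENNReal.ofReal (Real.exp (-(r : ℝ) * ε ^ 2 / 4)) := by
  obtain ⟨hε0, hε1⟩ := hε
  have hdet : IsUnit Shalf.det := (Matrix.isUnit_iff_isUnit_det _).1 hShalf.isUnit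
  obtain rfl : Sig = Shalf * Shalfᵀ := by
    rw [← hsq, ← Matrix.conjTranspose_eq_transpose_of_trivial, hShalf.isHermitian.eq]
  constructor
  · calc _ = stdGaussPi r {z | √(r / (1 - ε)) < √(∑ i, z i ^ 2)} :=
          gaussianVec_mahalanobis_mem h hdet (S := {x | √(r / (1 - ε)) < √x})
            (measurableSet_lt measurable_const (by fun_prop))
      _ ≤ stdGaussPi r {z | r / (1 - ε) ≤ ∑ i, z i ^ 2} :=
          measure_mono fun z hz => ((sqrt_lt_sqrt_iff (by bound)).1 hz).le
      _ ≤ _ := stdGaussPi_sum_sq_ge_le r hε0 hε1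
  · calc _ = stdGaussPi r {z | √(∑ i, z i ^ 2) < √(r * (1 - ε))} :=
          gaussianVec_mahalanobis_mem h hdet (S := {x | √x < √(r * (1 - ε))})
            (measurableSet_lt (by fun_prop) measurable_const)
      _ ≤ stdGaussPi r {z | ∑ i, z i ^ 2 ≤ r * (1 - ε)} :=
          measure_mono fun z hz => ((sqrt_lt_sqrt_iff (by positivity)).1 hz).le
      _ ≤ _ := stdGaussPi_sum_sq_le_le r hε0 hε1

/-- Gaussian concentration of measure: for the Gaussian measure `Γ_{h,Σ}` with
nonsingular covariance `Σ` and `ε ∈ (0,1)`, the mass outside the Mahalanobis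
shell of radius about `√r` is at most `exp(−rε²/4)`. -/
theorem gaussian_concentration
    {r : ℕ} (h : Fin r → ℝ) (Sig Shalf : Matrix (Fin r) (Fin r) ℝ)
    (hSig : Sig.PosDef) (hShalf : Shalf.PosDef) (hsq : Shalf * Shalf = Sig)
    (ε : ℝ) (hε : ε ∈ Set.Ioo (0:ℝ) 1) :
    gaussianVec h Shalf
        {ξ : Fin r → ℝ | Real.sqrt ((ξ - h) ⬝ᵥ Sig⁻¹.mulVec (ξ - h)) >
          Real.sqrt ((r : ℝ) / (1 - ε))}
      ≤ ENNReal.ofReal (Real.exp (-(r : ℝ) * ε ^ 2 / 4)) ∧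
    gaussianVec h Shalf
        {ξ : Fin r → ℝ | Real.sqrt ((ξ - h) ⬝ᵥ Sig⁻¹.mulVec (ξ - h)) <
          Real.sqrt ((r : ℝ) * (1 - ε))}
      ≤ ENNReal.ofReal (Real.exp (-(r : ℝ) * ε ^ 2 / 4)) :=
  gaussian_concentration_general h Sig Shalf hShalf hsq ε hε
end

section
/- Let ξ ∈ ℝʳ, S ∈ ℝʳˣᵐ. Then sup_{‖v‖≤1} ‖ξ + Sv‖² ≤ 1 if and only if there exists λ ≥ 0 such that the block matrix [[−ξᵀξ − λ + 1, ξᵀS], [Sᵀξ, λI − SᵀS]] is positive semidefinite. -/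
/-!
Let `v₀` maximise `q v = ‖ξ + S v‖²` on the unit sphere (if `m = 0` take `λ = 0`). Comparing
`q v₀` with the value of `q` at the mirror images of `v₀` in hyperplanes, which stay on the
sphere, and letting the hyperplane approach `v₀⊥`, yields the optimality conditions of this
trust-region problem: `Sᵀ (ξ + S v₀) = μ v₀` and `Sᵀ S ≤ μ I`. For `λ = μ` the quadratic form of
the block matrix at `(t, -v)` is `t² + μ (‖v‖² - t²) - ‖t ξ + S v‖²`, which then equals
`(μ ‖w‖² - ‖S w‖²) + t² (1 - q v₀)` with `w = v - t v₀`, a sum of two nonnegative terms.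
Conversely, positivity at `(1, -v)` gives `q v ≤ 1 + λ (‖v‖² - 1) ≤ 1` on the unit ball.
-/

open Matrix Filter

section
variable {κ : Type*} [Fintype κ]

lemma dotProduct_self_nonneg (v : κ → ℝ) : 0 ≤ v ⬝ᵥ v :=
  Finset.sum_nonneg fun i _ ↦ mul_self_nonneg (v i)

lemma norm_toLp_sq_eq_dotProduct_self (v : κ → ℝ) : ‖WithLp.toLp 2 v‖ ^ 2 = v ⬝ᵥ v := by
  rw [EuclideanSpace.real_norm_sq_eq]
  simp [dotProduct, sq]

lemma isCompact_setOf_dotProduct_self_eq_one : IsCompact {v : κ → ℝ | v ⬝ᵥ v = 1} := by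
  have : {v : κ → ℝ | v ⬝ᵥ v = 1} =
      (EuclideanSpace.equiv κ ℝ).symm ⁻¹' Metric.sphere 0 1 := by
    ext v
    rw [Set.mem_ofPred_eq, ← norm_toLp_sq_eq_dotProduct_self,
      pow_eq_one_iff_of_nonneg (norm_nonneg _) two_ne_zero]
    simp [EuclideanSpace.equiv]
  rw [this]
  exact (EuclideanSpace.equiv κ ℝ).symm.toHomeomorph.isCompact_preimage.2 (isCompact_sphere 0 1)

lemma dotProduct_self_sub_reflection (v d : κ → ℝ) :
    (v - (2 * (v ⬝ᵥ d) / (d ⬝ᵥ d)) • d) ⬝ᵥ (v - (2 * (v ⬝ᵥ d) / (d ⬝ᵥ d)) • d) = v ⬝ᵥ v := by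
  rcases eq_or_ne d 0 with rfl | hd
  · simp
  · have hD : d ⬝ᵥ d ≠ 0 := mt dotProduct_self_eq_zero.1 hd
    simp only [dotProduct_sub, sub_dotProduct, dotProduct_smul, smul_dotProduct, smul_eq_mul,
      dotProduct_comm d v]
    field_simp
    ring

end

lemma nonneg_of_forall_pos_nonneg {f : ℝ → ℝ} (hf : ContinuousAt f 0) (h : ∀ ε > 0, 0 ≤ f ε) :
    0 ≤ f 0 :=
  ge_of_tendsto (hf.tendsto.mono_left nhdsWithin_le_nhds)
    (eventually_nhdsWithin_of_forall (s := Set.Ioi 0) h)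

section
variable {ι κ : Type*} [Fintype ι] [Fintype κ]

lemma dotProduct_self_add_mulVec_sub_smul (ξ : ι → ℝ) (S : Matrix ι κ ℝ) (v d : κ → ℝ) (c : ℝ) :
    (ξ + S *ᵥ (v - c • d)) ⬝ᵥ (ξ + S *ᵥ (v - c • d)) = (ξ + S *ᵥ v) ⬝ᵥ (ξ + S *ᵥ v)
      - 2 * c * ((ξ + S *ᵥ v) ᵥ* S ⬝ᵥ d) + c ^ 2 * ((S *ᵥ d) ⬝ᵥ (S *ᵥ d)) := by
  rw [mulVec_sub, mulVec_smul, ← dotProduct_mulVec]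
  simp only [dotProduct_add, add_dotProduct, dotProduct_sub, sub_dotProduct, dotProduct_smul,
    smul_dotProduct, smul_eq_mul, dotProduct_comm (S *ᵥ d) ξ, dotProduct_comm (S *ᵥ d) (S *ᵥ v),
    dotProduct_comm (S *ᵥ v) ξ]
  ring

/-- Comparing `v₀` with its mirror image in the hyperplane `d⊥`, which again lies on the sphere. -/
lemma sq_mul_le_of_isMaxOn {ξ : ι → ℝ} {S : Matrix ι κ ℝ} {v₀ : κ → ℝ}
    (hv₀ : v₀ ⬝ᵥ v₀ = 1)
    (hmax : IsMaxOn (fun v ↦ (ξ + S *ᵥ v) ⬝ᵥ (ξ + S *ᵥ v)) {v | v ⬝ᵥ v = 1} v₀) (d : κ → ℝ) :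
    (v₀ ⬝ᵥ d) ^ 2 * ((S *ᵥ d) ⬝ᵥ (S *ᵥ d))
      ≤ (v₀ ⬝ᵥ d) * ((ξ + S *ᵥ v₀) ᵥ* S ⬝ᵥ d) * (d ⬝ᵥ d) := by
  rcases eq_or_ne d 0 with rfl | hd
  · simp
  have hD : d ⬝ᵥ d ≠ 0 := mt dotProduct_self_eq_zero.1 hd
  set c := 2 * (v₀ ⬝ᵥ d) / (d ⬝ᵥ d) with hc
  have hle : _ ≤ _ := isMaxOn_iff.1 hmax (v₀ - c • d) <| by
    rw [Set.mem_ofPred_eq, dotProduct_self_sub_reflection, hv₀]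
  rw [dotProduct_self_add_mulVec_sub_smul] at hle
  have hcD : c * (d ⬝ᵥ d) = 2 * (v₀ ⬝ᵥ d) := by rw [hc]; field_simp
  have hscaled := mul_nonneg (sq_nonneg (d ⬝ᵥ d)) (sub_nonneg.2 hle)
  linear_combination hscaled / 4 + ((ξ + S *ᵥ v₀) ᵥ* S ⬝ᵥ d * (d ⬝ᵥ d) / 2
    - (S *ᵥ d ⬝ᵥ S *ᵥ d) * (c * (d ⬝ᵥ d) + 2 * (v₀ ⬝ᵥ d)) / 4) * hcD

lemma eq_smul_of_forall_sq_mul_le {S : Matrix ι κ ℝ} {v₀ g : κ → ℝ} (hv₀ : v₀ ⬝ᵥ v₀ = 1)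
    (h : ∀ d, (v₀ ⬝ᵥ d) ^ 2 * ((S *ᵥ d) ⬝ᵥ (S *ᵥ d)) ≤ (v₀ ⬝ᵥ d) * (g ⬝ᵥ d) * (d ⬝ᵥ d)) :
    g = (g ⬝ᵥ v₀) • v₀ := by
  set u := g - (g ⬝ᵥ v₀) • v₀ with hu
  have hv₀u : v₀ ⬝ᵥ u = 0 := by
    rw [hu, dotProduct_sub, dotProduct_smul, hv₀, dotProduct_comm, smul_eq_mul, mul_one, sub_self]
  have hgu : g ⬝ᵥ u = u ⬝ᵥ u := by
    nth_rw 2 [hu]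
    rw [sub_dotProduct, smul_dotProduct, hv₀u, smul_zero, sub_zero]
  have hpos : ∀ ε > 0, 0 ≤ (ε * (g ⬝ᵥ v₀) - u ⬝ᵥ u) * (ε ^ 2 + u ⬝ᵥ u) := by
    intro ε hε
    have hd := h (ε • v₀ - u)
    simp only [dotProduct_sub, sub_dotProduct, dotProduct_smul, smul_dotProduct, smul_eq_mul,
      hv₀, hv₀u, hgu, dotProduct_comm u v₀] at hd
    have hQ := dotProduct_self_nonneg (S *ᵥ (ε • v₀ - u))
    nlinarith
  have hG := nonneg_of_forall_pos_nonneg (by fun_prop) hpos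
  have hu0 : u = 0 := dotProduct_self_eq_zero.1 (by nlinarith [dotProduct_self_nonneg u])
  rwa [hu, sub_eq_zero] at hu0

lemma le_mul_dotProduct_self_of_forall_sq_mul_le {S : Matrix ι κ ℝ} {v₀ : κ → ℝ} {μ : ℝ}
    (hv₀ : v₀ ⬝ᵥ v₀ = 1)
    (h : ∀ d, (v₀ ⬝ᵥ d) ^ 2 * ((S *ᵥ d) ⬝ᵥ (S *ᵥ d)) ≤ (v₀ ⬝ᵥ d) ^ 2 * (μ * (d ⬝ᵥ d)))
    (d : κ → ℝ) : (S *ᵥ d) ⬝ᵥ (S *ᵥ d) ≤ μ * (d ⬝ᵥ d) := by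
  have of_pos : ∀ d, 0 < v₀ ⬝ᵥ d → (S *ᵥ d) ⬝ᵥ (S *ᵥ d) ≤ μ * (d ⬝ᵥ d) :=
    fun d hd ↦ le_of_mul_le_mul_left (h d) (by positivity)
  have of_nonneg : ∀ d, 0 ≤ v₀ ⬝ᵥ d → (S *ᵥ d) ⬝ᵥ (S *ᵥ d) ≤ μ * (d ⬝ᵥ d) := by
    intro d hd
    have := nonneg_of_forall_pos_nonneg
      (f := fun ε ↦ μ * ((d + ε • v₀) ⬝ᵥ (d + ε • v₀)) - (S *ᵥ (d + ε • v₀)) ⬝ᵥ (S *ᵥ (d + ε • v₀)))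
      (by fun_prop) fun ε hε ↦ sub_nonneg.2 <| of_pos _ <| by
        rw [dotProduct_add, dotProduct_smul, hv₀, smul_eq_mul, mul_one]; positivity
    simpa using this
  rcases le_total 0 (v₀ ⬝ᵥ d) with hd | hd
  · exact of_nonneg d hd
  · simpa [mulVec_neg] using of_nonneg (-d) (by simpa using hd)

lemma dotProduct_self_smul_add_mulVec_le {ξ : ι → ℝ} {S : Matrix ι κ ℝ} {v₀ : κ → ℝ} {μ : ℝ}
    (hv₀ : v₀ ⬝ᵥ v₀ = 1) (hstat : (ξ + S *ᵥ v₀) ᵥ* S = μ • v₀)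
    (hQ : ∀ d, (S *ᵥ d) ⬝ᵥ (S *ᵥ d) ≤ μ * (d ⬝ᵥ d))
    (hq : (ξ + S *ᵥ v₀) ⬝ᵥ (ξ + S *ᵥ v₀) ≤ 1) (t : ℝ) (v : κ → ℝ) :
    (t • ξ + S *ᵥ v) ⬝ᵥ (t • ξ + S *ᵥ v) ≤ t ^ 2 + μ * (v ⬝ᵥ v - t ^ 2) := by
  have hstat' : ∀ d, (ξ + S *ᵥ v₀) ⬝ᵥ (S *ᵥ d) = μ * (v₀ ⬝ᵥ d) := fun d ↦ by
    rw [dotProduct_mulVec, hstat, smul_dotProduct, smul_eq_mul]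
  have key : t ^ 2 + μ * (v ⬝ᵥ v - t ^ 2) - (t • ξ + S *ᵥ v) ⬝ᵥ (t • ξ + S *ᵥ v)
      = (μ * ((v - t • v₀) ⬝ᵥ (v - t • v₀)) - (S *ᵥ (v - t • v₀)) ⬝ᵥ (S *ᵥ (v - t • v₀)))
        + t ^ 2 * (1 - (ξ + S *ᵥ v₀) ⬝ᵥ (ξ + S *ᵥ v₀)) := by
    have hv := hstat' v
    have hv₀' := hstat' v₀
    rw [hv₀] at hv₀'
    rw [mulVec_sub, mulVec_smul]
    simp only [dotProduct_add, add_dotProduct, dotProduct_sub, sub_dotProduct, dotProduct_smul,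
      smul_dotProduct, smul_eq_mul, hv₀, dotProduct_comm (S *ᵥ v) ξ,
      dotProduct_comm (S *ᵥ v₀) ξ, dotProduct_comm (S *ᵥ v) (S *ᵥ v₀),
      dotProduct_comm v v₀] at hv hv₀' ⊢
    linear_combination 2 * t ^ 2 * hv₀' - 2 * t * hv
  nlinarith [hQ (v - t • v₀), mul_nonneg (sq_nonneg t) (sub_nonneg.2 hq)]

theorem exists_nonneg_forall_dotProduct_le_of_forall_dotProduct_le_one
    (ξ : ι → ℝ) (S : Matrix ι κ ℝ)
    (h : ∀ v, v ⬝ᵥ v ≤ 1 → (ξ + S *ᵥ v) ⬝ᵥ (ξ + S *ᵥ v) ≤ 1) :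
    ∃ l, 0 ≤ l ∧ ∀ (t : ℝ) (v : κ → ℝ),
      (t • ξ + S *ᵥ v) ⬝ᵥ (t • ξ + S *ᵥ v) ≤ t ^ 2 + l * (v ⬝ᵥ v - t ^ 2) := by
  classical
  rcases isEmpty_or_nonempty κ with hκ | ⟨⟨i⟩⟩
  · refine ⟨0, le_rfl, fun t v ↦ ?_⟩
    have hξ : ξ ⬝ᵥ ξ ≤ 1 := by simpa using h 0 (by simp)
    rw [Subsingleton.elim v 0]
    simp only [mulVec_zero, add_zero, smul_dotProduct, dotProduct_smul, smul_eq_mul,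
      dotProduct_zero, zero_sub, mul_neg, zero_mul, neg_zero]
    nlinarith [mul_le_of_le_one_right (sq_nonneg t) hξ]
  have hq : Continuous fun v ↦ (ξ + S *ᵥ v) ⬝ᵥ (ξ + S *ᵥ v) := by fun_prop
  obtain ⟨v₀, hv₀, hmax⟩ := isCompact_setOf_dotProduct_self_eq_one.exists_isMaxOn
    ⟨Pi.single i 1, by simp⟩ hq.continuousOn
  have hv₀ : v₀ ⬝ᵥ v₀ = 1 := hv₀
  have hreflect := sq_mul_le_of_isMaxOn hv₀ hmax
  have hstat := eq_smul_of_forall_sq_mul_le hv₀ hreflect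
  set μ := (ξ + S *ᵥ v₀) ᵥ* S ⬝ᵥ v₀
  have hQ := le_mul_dotProduct_self_of_forall_sq_mul_le hv₀ (μ := μ) fun d ↦ by
    simpa only [hstat, smul_dotProduct, smul_eq_mul, sq, mul_assoc, mul_left_comm μ]
      using hreflect d
  refine ⟨μ, ?_, dotProduct_self_smul_add_mulVec_le hv₀ hstat hQ (h v₀ hv₀.le)⟩
  simpa [hv₀] using (dotProduct_self_nonneg _).trans (hQ v₀)

theorem forall_dotProduct_le_one_iff_exists (ξ : ι → ℝ) (S : Matrix ι κ ℝ) :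
    (∀ v, v ⬝ᵥ v ≤ 1 → (ξ + S *ᵥ v) ⬝ᵥ (ξ + S *ᵥ v) ≤ 1) ↔ ∃ l, 0 ≤ l ∧ ∀ (t : ℝ) (v : κ → ℝ),
      (t • ξ + S *ᵥ v) ⬝ᵥ (t • ξ + S *ᵥ v) ≤ t ^ 2 + l * (v ⬝ᵥ v - t ^ 2) := by
  refine ⟨exists_nonneg_forall_dotProduct_le_of_forall_dotProduct_le_one ξ S, ?_⟩
  rintro ⟨l, hl, h⟩ v hv
  have := h 1 v
  rw [one_smul, one_pow] at this
  nlinarith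

end

section
variable {ι κ : Type*} [Fintype ι] [DecidableEq κ]

def sProcedureMatrix (ξ : ι → ℝ) (S : Matrix ι κ ℝ) (l : ℝ) : Matrix (Fin 1 ⊕ κ) (Fin 1 ⊕ κ) ℝ :=
  fromBlocks (of fun _ _ ↦ -(ξ ⬝ᵥ ξ) - l + 1) (of fun _ j ↦ (ξ ᵥ* S) j) (of fun i _ ↦ (ξ ᵥ* S) i)
    (l • 1 - Sᵀ * S)

lemma sProcedureMatrix_isHermitian (ξ : ι → ℝ) (S : Matrix ι κ ℝ) (l : ℝ) :
    (sProcedureMatrix ξ S l).IsHermitian :=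
  .fromBlocks (by ext; rfl) (by ext; rfl) <| (isHermitian_one.smul (IsSelfAdjoint.all l)).sub <| by
    simpa using isHermitian_conjTranspose_mul_self S

variable [Fintype κ]

lemma sumElim_dotProduct_sProcedureMatrix_mulVec (ξ : ι → ℝ) (S : Matrix ι κ ℝ) (l : ℝ)
    (u : Fin 1 → ℝ) (v : κ → ℝ) :
    Sum.elim u v ⬝ᵥ (sProcedureMatrix ξ S l *ᵥ Sum.elim u v)
      = u 0 ^ 2 + l * (v ⬝ᵥ v - u 0 ^ 2) - (u 0 • ξ - S *ᵥ v) ⬝ᵥ (u 0 • ξ - S *ᵥ v) := by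
  simp only [sProcedureMatrix, fromBlocks_mulVec, Sum.elim_comp_inl, Sum.elim_comp_inr,
    sumElim_dotProduct_sumElim]
  have hA : u ⬝ᵥ ((of fun _ _ ↦ -(ξ ⬝ᵥ ξ) - l + 1) *ᵥ u) = (-(ξ ⬝ᵥ ξ) - l + 1) * u 0 ^ 2 := by
    simp only [dotProduct, mulVec, of_apply, Finset.univ_unique, Fin.default_eq_zero,
      Finset.sum_singleton, sq]
    ring
  have hB : u ⬝ᵥ ((of fun _ j ↦ (ξ ᵥ* S) j) *ᵥ v) = u 0 * (ξ ᵥ* S ⬝ᵥ v) := by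
    simp [dotProduct, mulVec]
  have hC : v ⬝ᵥ ((of fun i _ ↦ (ξ ᵥ* S) i) *ᵥ u) = u 0 * (ξ ᵥ* S ⬝ᵥ v) := by
    simp only [dotProduct, mulVec, Fin.sum_univ_one, of_apply, Finset.mul_sum]
    exact Finset.sum_congr rfl fun _ _ ↦ by ring
  have hD : v ⬝ᵥ ((l • 1 - Sᵀ * S) *ᵥ v) = l * (v ⬝ᵥ v) - (S *ᵥ v) ⬝ᵥ (S *ᵥ v) := by
    rw [sub_mulVec, dotProduct_sub, smul_mulVec, one_mulVec, dotProduct_smul, ← mulVec_mulVec,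
      dotProduct_mulVec v Sᵀ, vecMul_transpose, smul_eq_mul]
  rw [dotProduct_add, dotProduct_add, hA, hB, hC, hD, ← dotProduct_mulVec]
  simp only [dotProduct_sub, sub_dotProduct, dotProduct_smul, smul_dotProduct, smul_eq_mul,
    dotProduct_comm (S *ᵥ v) ξ]
  ring

lemma sProcedureMatrix_posSemidef_iff (ξ : ι → ℝ) (S : Matrix ι κ ℝ) (l : ℝ) :
    (sProcedureMatrix ξ S l).PosSemidef ↔ ∀ (t : ℝ) (v : κ → ℝ),
      (t • ξ + S *ᵥ v) ⬝ᵥ (t • ξ + S *ᵥ v) ≤ t ^ 2 + l * (v ⬝ᵥ v - t ^ 2) := by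
  rw [posSemidef_iff_dotProduct_mulVec, and_iff_right (sProcedureMatrix_isHermitian ξ S l)]
  constructor
  · intro h t v
    have := h (Sum.elim (fun _ ↦ t) (-v))
    rwa [star_trivial, sumElim_dotProduct_sProcedureMatrix_mulVec, mulVec_neg, sub_neg_eq_add,
      dotProduct_neg, neg_dotProduct, neg_neg, sub_nonneg] at this
  · intro h x
    rw [star_trivial, ← Sum.elim_comp_inl_inr x, sumElim_dotProduct_sProcedureMatrix_mulVec,
      sub_nonneg, sub_eq_add_neg, ← mulVec_neg]
    simpa only [dotProduct_neg, neg_dotProduct, neg_neg] using h _ (-(x ∘ Sum.inr))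

end

/-- S-procedure / S-lemma characterization of the robust quadratic constraint:
`sup_{‖v‖≤1} ‖ξ + Sv‖² ≤ 1` iff there exists `λ ≥ 0` such that the block matrix
`[[−ξᵀξ − λ + 1, ξᵀS], [Sᵀξ, λI − SᵀS]]` is positive semidefinite. -/
theorem s_lemma_robust_quadratic
    {r m : ℕ} (ξ : Fin r → ℝ) (S : Matrix (Fin r) (Fin m) ℝ) :
    (∀ v : Fin m → ℝ, Real.sqrt (v ⬝ᵥ v) ≤ 1 →
        (ξ + S.mulVec v) ⬝ᵥ (ξ + S.mulVec v) ≤ 1)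
      ↔ ∃ l : ℝ, 0 ≤ l ∧
          (Matrix.fromBlocks
            (Matrix.of fun _ _ : Fin 1 => -(ξ ⬝ᵥ ξ) - l + 1)
            (Matrix.of fun _ (j : Fin m) => (ξ ᵥ* S) j)
            (Matrix.of fun (i : Fin m) _ => (ξ ᵥ* S) i)
            (l • (1 : Matrix (Fin m) (Fin m) ℝ) - Sᵀ * S)).PosSemidef := by
  simp_rw [Real.sqrt_le_one]
  exact (forall_dotProduct_le_one_iff_exists ξ S).trans <|
    exists_congr fun l ↦ and_congr_right fun _ ↦ (sProcedureMatrix_posSemidef_iff ξ S l).symm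
end

section
/- Let g₁, …, g_r : ℝᵏ × ℝˡ → ℝ be quasi-convex functions, and let w be an ℝˡ-valued random vector with a log-concave probability density. Then the function p(d) = P(g₁(d, w) ≤ 0, …, g_r(d, w) ≤ 0) is log-concave in d, and consequently for any α ∈ (0,1) the set {d : p(d) ≥ 1 − α} is convex. -/
open MeasureTheory
open scoped ENNReal

/-- The probability `p(d) = P(g₁(d,w) ≤ 0, …, g_r(d,w) ≤ 0)`. -/
noncomputable def ccProb {Ω : Type*} [MeasurableSpace Ω] (P : Measure Ω)
    {k l r : ℕ} (g : Fin r → (Fin k → ℝ) × (Fin l → ℝ) → ℝ)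
    (w : Ω → Fin l → ℝ) (d : Fin k → ℝ) : ℝ :=
  (P {ω | ∀ i, g i (d, w ω) ≤ 0}).toReal

/-!
The function `φ(d, x) = 1_K(d, x) f(x)`, with `K = {(d, x) | ∀ i, gᵢ(d, x) ≤ 0}` convex by
quasi-convexity, is log-concave on `ℝᵏ × ℝˡ`, and `p(d) = ∫ φ(d, x) dx`. Marginals of log-concave
functions are log-concave by the Prékopa–Leindler inequality
`(∫ f)^a (∫ g)^b ≤ ∫ h` whenever `f(x)^a g(y)^b ≤ h(a x + b y)`. On `ℝ` it follows from the
layer-cake formula and the one-dimensional Brunn–Minkowski inequality `|a A + b B| ≥ a |A| + b |B|`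
applied to superlevel sets (after normalizing `sup f = sup g = 1` and using AM-GM); it passes to
products by Fubini, hence to `ℝⁿ`. Superlevel sets of a log-concave function are convex.
-/

open Set
open scoped Pointwise

namespace ENNReal

theorem rpow_mul_rpow_le_add {a b : ℝ} (ha : 0 < a) (hb : 0 < b) (hab : a + b = 1)
    (p q : ℝ≥0∞) : p ^ a * q ^ b ≤ ENNReal.ofReal a * p + ENNReal.ofReal b * q := by
  rcases eq_or_ne p ⊤ with rfl | hp
  · simp [ENNReal.mul_top, ha]
  rcases eq_or_ne q ⊤ with rfl | hq
  · simp [ENNReal.mul_top, hb]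
  rw [← ENNReal.ofReal_toReal hp, ← ENNReal.ofReal_toReal hq,
    ENNReal.ofReal_rpow_of_nonneg ENNReal.toReal_nonneg ha.le,
    ENNReal.ofReal_rpow_of_nonneg ENNReal.toReal_nonneg hb.le,
    ← ENNReal.ofReal_mul (by positivity), ← ENNReal.ofReal_mul ha.le,
    ← ENNReal.ofReal_mul hb.le, ← ENNReal.ofReal_add (by positivity) (by positivity)]
  exact ENNReal.ofReal_le_ofReal (Real.geom_mean_le_arith_mean2_weighted ha.le hb.le
    ENNReal.toReal_nonneg ENNReal.toReal_nonneg hab)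

theorem iSup_rpow_mul_iSup_rpow_le {F G : ℕ → ℝ≥0∞} (hF : Monotone F) (hG : Monotone G)
    {a b : ℝ} (ha : 0 < a) (hb : 0 < b) {c : ℝ≥0∞} (H : ∀ n, F n ^ a * G n ^ b ≤ c) :
    (⨆ n, F n) ^ a * (⨆ n, G n) ^ b ≤ c := by
  have hFa := (ENNReal.orderIsoRpow a ha).map_iSup F
  have hGb := (ENNReal.orderIsoRpow b hb).map_iSup G
  simp only [ENNReal.orderIsoRpow_apply] at hFa hGb
  rw [hFa, hGb, ENNReal.iSup_mul]
  refine iSup_le fun n => ?_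
  rw [ENNReal.mul_iSup]
  refine iSup_le fun m => le_trans ?_ (H (max n m))
  gcongr
  exacts [hF (le_max_left n m), hG (le_max_right n m)]

end ENNReal

theorem Real.volume_image_mul_add (a c : ℝ) (s : Set ℝ) :
    volume ((fun x => a * x + c) '' s) = ENNReal.ofReal |a| * volume s := by
  have : (fun x => a * x + c) '' s = c +ᵥ a • s := by
    ext y
    simp [mem_vadd_set, mem_smul_set, add_comm]
  rw [this, measure_vadd, Measure.addHaar_smul, Module.finrank_self, pow_one]

theorem Real.brunnMinkowski_of_isCompact {a b : ℝ} (ha : 0 ≤ a) (hb : 0 ≤ b) {K L C : Set ℝ}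
    (hK : IsCompact K) (hL : IsCompact L) (hKne : K.Nonempty) (hLne : L.Nonempty)
    (hC : ∀ x ∈ K, ∀ y ∈ L, a * x + b * y ∈ C) :
    ENNReal.ofReal a * volume K + ENNReal.ofReal b * volume L ≤ volume C := by
  set x₀ := sSup K
  set y₀ := sInf L
  have hx₀ : x₀ ∈ K := hK.sSup_mem hKne
  have hy₀ : y₀ ∈ L := hL.sInf_mem hLne
  -- `a K + b y₀` and `a x₀ + b L` lie in `C` and meet only at `a x₀ + b y₀`.
  set U := (fun x => a * x + b * y₀) '' K
  set V := (fun y => b * y + a * x₀) '' L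
  have hU : U ⊆ C ∩ Iic (a * x₀ + b * y₀) := by
    rintro _ ⟨x, hx, rfl⟩
    refine ⟨hC x hx y₀ hy₀, ?_⟩
    show a * x + b * y₀ ≤ a * x₀ + b * y₀
    nlinarith [le_csSup hK.bddAbove hx]
  have hV : V ⊆ C ∩ Ici (a * x₀ + b * y₀) := by
    rintro _ ⟨y, hy, rfl⟩
    refine ⟨?_, ?_⟩
    · show b * y + a * x₀ ∈ C
      rw [add_comm]
      exact hC x₀ hx₀ y hy
    show a * x₀ + b * y₀ ≤ b * y + a * x₀
    nlinarith [csInf_le hL.bddBelow hy]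
  have hUV : volume (U ∩ V) = 0 := measure_mono_null
    (fun z hz => le_antisymm (hU hz.1).2 (hV hz.2).2) (measure_singleton _)
  calc ENNReal.ofReal a * volume K + ENNReal.ofReal b * volume L
      = volume U + volume V := by
        rw [Real.volume_image_mul_add, Real.volume_image_mul_add, abs_of_nonneg ha,
          abs_of_nonneg hb]
    _ = volume (U ∪ V) := by
        rw [← measure_union_add_inter U (hL.image (by fun_prop)).measurableSet, hUV, add_zero]
    _ ≤ volume C := measure_mono (union_subset (hU.trans inter_subset_left)
        (hV.trans inter_subset_left))

theorem Real.brunnMinkowski {a b : ℝ} (ha : 0 ≤ a) (hb : 0 ≤ b) {A B C : Set ℝ}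
    (hA : MeasurableSet A) (hB : MeasurableSet B) (hAne : A.Nonempty) (hBne : B.Nonempty)
    (hC : ∀ x ∈ A, ∀ y ∈ B, a * x + b * y ∈ C) :
    ENNReal.ofReal a * volume A + ENNReal.ofReal b * volume B ≤ volume C := by
  obtain ⟨x₀, hx₀⟩ := hAne
  obtain ⟨y₀, hy₀⟩ := hBne
  rw [hA.measure_eq_iSup_isCompact, hB.measure_eq_iSup_isCompact]
  simp only [ENNReal.mul_iSup, iSup_and', iSup_subtype']
  have : Nonempty {K : Set ℝ // K ⊆ A ∧ IsCompact K} := ⟨⟨∅, empty_subset A, isCompact_empty⟩⟩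
  have : Nonempty {L : Set ℝ // L ⊆ B ∧ IsCompact L} := ⟨⟨∅, empty_subset B, isCompact_empty⟩⟩
  refine ENNReal.iSup_add_iSup_le fun ⟨K, hKA, hK⟩ ⟨L, hLB, hL⟩ => ?_
  -- Adding a point to each compact set makes them nonempty without changing the hypothesis.
  calc ENNReal.ofReal a * volume K + ENNReal.ofReal b * volume L
      ≤ ENNReal.ofReal a * volume (insert x₀ K) + ENNReal.ofReal b * volume (insert y₀ L) := by
        gcongr <;> exact subset_insert _ _
    _ ≤ volume C := Real.brunnMinkowski_of_isCompact ha hb (hK.insert x₀) (hL.insert y₀)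
        (insert_nonempty _ _) (insert_nonempty _ _) fun x hx y hy =>
          hC x (insert_subset hx₀ hKA hx) y (insert_subset hy₀ hLB hy)

theorem lintegral_min_one_eq_setLIntegral_Ioo {α : Type*} [MeasurableSpace α] (μ : Measure α)
    {f : α → ℝ≥0∞} (hf : Measurable f) :
    ∫⁻ x, min (f x) 1 ∂μ = ∫⁻ t in Ioo (0 : ℝ) 1, μ {x | ENNReal.ofReal t < f x} := by
  have hfin : ∀ x, min (f x) 1 ≠ ⊤ := fun x => ne_top_of_le_ne_top ENNReal.one_ne_top
    (min_le_right _ _)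
  have hlevel : ∀ t ∈ Ioi (0 : ℝ), μ {x | t < (min (f x) 1).toReal}
      = (Iio 1).indicator (fun t => μ {x | ENNReal.ofReal t < f x}) t := by
    intro t ht
    have hset : {x | t < (min (f x) 1).toReal} = {x | ENNReal.ofReal t < f x ∧ t < 1} := by
      ext x
      simp only [mem_ofPred_eq, ← ENNReal.ofReal_lt_iff_lt_toReal (le_of_lt ht) (hfin x),
        lt_min_iff, ENNReal.ofReal_lt_one]
    by_cases ht1 : t < 1 <;> simp [hset, ht1]
  calc ∫⁻ x, min (f x) 1 ∂μ = ∫⁻ x, ENNReal.ofReal (min (f x) 1).toReal ∂μ := by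
        simp only [ENNReal.ofReal_toReal (hfin _)]
    _ = ∫⁻ t in Ioi 0, μ {x | t < (min (f x) 1).toReal} :=
        lintegral_eq_lintegral_meas_lt μ (.of_forall fun _ => ENNReal.toReal_nonneg)
          (hf.min measurable_const).ennreal_toReal.aemeasurable
    _ = ∫⁻ t in Ioo 0 1, μ {x | ENNReal.ofReal t < f x} := by
        rw [setLIntegral_congr_fun measurableSet_Ioi hlevel,
          setLIntegral_indicator measurableSet_Iio, inter_comm, Ioi_inter_Iio]

theorem measurable_measure_ofReal_lt {α : Type*} [MeasurableSpace α] (μ : Measure α)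
    (f : α → ℝ≥0∞) : Measurable fun t : ℝ => μ {x | ENNReal.ofReal t < f x} :=
  Antitone.measurable fun _ _ hst => measure_mono fun _ hx =>
    (ENNReal.ofReal_le_ofReal hst).trans_lt hx

theorem Real.ofReal_mul_lintegral_add_le_of_iSup_eq_one {a b : ℝ} (ha : 0 < a) (hb : 0 < b)
    (hab : a + b = 1) {f g h : ℝ → ℝ≥0∞} (hf : Measurable f) (hg : Measurable g)
    (hh : Measurable h) (hf₁ : ⨆ x, f x = 1) (hg₁ : ⨆ x, g x = 1)
    (hfgh : ∀ x y, f x ^ a * g y ^ b ≤ h (a * x + b * y)) :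
    ENNReal.ofReal a * (∫⁻ x, f x) + ENNReal.ofReal b * ∫⁻ x, g x ≤ ∫⁻ x, h x := by
  have hf_int : ∫⁻ x, f x = ∫⁻ t in Ioo (0 : ℝ) 1, volume {x | ENNReal.ofReal t < f x} := by
    simpa only [fun x => min_eq_left (hf₁ ▸ le_iSup f x)]
      using lintegral_min_one_eq_setLIntegral_Ioo volume hf
  have hg_int : ∫⁻ x, g x = ∫⁻ t in Ioo (0 : ℝ) 1, volume {x | ENNReal.ofReal t < g x} := by
    simpa only [fun x => min_eq_left (hg₁ ▸ le_iSup g x)]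
      using lintegral_min_one_eq_setLIntegral_Ioo volume hg
  -- For `0 < t < 1` the superlevel sets `{f > t}`, `{g > t}` are nonempty and
  -- `a {f > t} + b {g > t} ⊆ {h > t}`, since `t = t ^ a * t ^ b`.
  have hlevel : ∀ t ∈ Ioo (0 : ℝ) 1,
      ENNReal.ofReal a * volume {x | ENNReal.ofReal t < f x}
        + ENNReal.ofReal b * volume {x | ENNReal.ofReal t < g x}
        ≤ volume {x | ENNReal.ofReal t < h x} := by
    rintro t ⟨ht₀, ht₁⟩
    have hlt : ENNReal.ofReal t < 1 := ENNReal.ofReal_lt_one.2 ht₁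
    have ht : ENNReal.ofReal t ^ a * ENNReal.ofReal t ^ b = ENNReal.ofReal t := by
      rw [← ENNReal.rpow_add _ _ (ENNReal.ofReal_pos.2 ht₀).ne' ENNReal.ofReal_ne_top, hab,
        ENNReal.rpow_one]
    have hfne : {x | ENNReal.ofReal t < f x}.Nonempty := lt_iSup_iff.1 (hf₁.symm ▸ hlt : ENNReal.ofReal t < ⨆ x, f x)
    have hgne : {x | ENNReal.ofReal t < g x}.Nonempty := lt_iSup_iff.1 (hg₁.symm ▸ hlt : ENNReal.ofReal t < ⨆ x, g x)
    refine Real.brunnMinkowski ha.le hb.le (measurableSet_lt measurable_const hf)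
      (measurableSet_lt measurable_const hg) hfne hgne fun x hx y hy => ?_
    calc ENNReal.ofReal t = ENNReal.ofReal t ^ a * ENNReal.ofReal t ^ b := ht.symm
      _ < f x ^ a * g y ^ b :=
          ENNReal.mul_lt_mul (ENNReal.rpow_lt_rpow hx ha) (ENNReal.rpow_lt_rpow hy hb)
      _ ≤ h (a * x + b * y) := hfgh x y
  calc ENNReal.ofReal a * (∫⁻ x, f x) + ENNReal.ofReal b * ∫⁻ x, g x
      = ∫⁻ t in Ioo (0 : ℝ) 1, (ENNReal.ofReal a * volume {x | ENNReal.ofReal t < f x}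
          + ENNReal.ofReal b * volume {x | ENNReal.ofReal t < g x}) := by
        rw [hf_int, hg_int, lintegral_add_left ((measurable_measure_ofReal_lt _ f).const_mul _),
          lintegral_const_mul _ (measurable_measure_ofReal_lt _ f),
          lintegral_const_mul _ (measurable_measure_ofReal_lt _ g)]
    _ ≤ ∫⁻ t in Ioo (0 : ℝ) 1, volume {x | ENNReal.ofReal t < h x} :=
        setLIntegral_mono (measurable_measure_ofReal_lt _ h) hlevel
    _ = ∫⁻ x, min (h x) 1 := (lintegral_min_one_eq_setLIntegral_Ioo volume hh).symm
    _ ≤ ∫⁻ x, h x := lintegral_mono fun x => min_le_left _ _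

theorem rpow_lintegral_mul_rpow_lintegral_le_of_const_mul {α : Type*} [MeasurableSpace α]
    {μ : Measure α} {a b : ℝ} (ha : 0 ≤ a) (hb : 0 ≤ b) {c d : ℝ≥0∞} (hc₀ : c ≠ 0)
    (hc : c ≠ ⊤) (hd₀ : d ≠ 0) (hd : d ≠ ⊤) {f g h : α → ℝ≥0∞}
    (H : (∫⁻ x, c * f x ∂μ) ^ a * (∫⁻ x, d * g x ∂μ) ^ b ≤ ∫⁻ x, c ^ a * d ^ b * h x ∂μ) :
    (∫⁻ x, f x ∂μ) ^ a * (∫⁻ x, g x ∂μ) ^ b ≤ ∫⁻ x, h x ∂μ := by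
  have hcd₀ : c ^ a * d ^ b ≠ 0 := mul_ne_zero (by simp [hc₀, hc]) (by simp [hd₀, hd])
  have hcd : c ^ a * d ^ b ≠ ⊤ :=
    ENNReal.mul_ne_top (ENNReal.rpow_ne_top_of_nonneg ha hc) (ENNReal.rpow_ne_top_of_nonneg hb hd)
  rwa [lintegral_const_mul' _ _ hc, lintegral_const_mul' _ _ hd, lintegral_const_mul' _ _ hcd,
    ENNReal.mul_rpow_of_nonneg _ _ ha, ENNReal.mul_rpow_of_nonneg _ _ hb, mul_mul_mul_comm,
    ENNReal.mul_le_mul_iff_right hcd₀ hcd] at H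

def HasPrekopaLeindler {E : Type*} [MeasurableSpace E] [AddCommMonoid E] [Module ℝ E]
    (μ : Measure E) : Prop :=
  ∀ ⦃a b : ℝ⦄, 0 < a → 0 < b → a + b = 1 →
    ∀ ⦃f g h : E → ℝ≥0∞⦄, Measurable f → Measurable g → Measurable h →
      (∀ x y, f x ^ a * g y ^ b ≤ h (a • x + b • y)) →
        (∫⁻ x, f x ∂μ) ^ a * (∫⁻ x, g x ∂μ) ^ b ≤ ∫⁻ x, h x ∂μ

namespace Real

theorem rpow_lintegral_mul_rpow_lintegral_le_of_iSup_ne_top {a b : ℝ} (ha : 0 < a) (hb : 0 < b)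
    (hab : a + b = 1) {f g h : ℝ → ℝ≥0∞} (hf : Measurable f) (hg : Measurable g)
    (hh : Measurable h) (hf_top : ⨆ x, f x ≠ ⊤) (hg_top : ⨆ x, g x ≠ ⊤)
    (hfgh : ∀ x y, f x ^ a * g y ^ b ≤ h (a * x + b * y)) :
    (∫⁻ x, f x) ^ a * (∫⁻ x, g x) ^ b ≤ ∫⁻ x, h x := by
  set M := ⨆ x, f x
  set N := ⨆ x, g x
  rcases eq_or_ne M 0 with hM | hM
  · simp [ENNReal.iSup_eq_zero.1 hM, ENNReal.zero_rpow_of_pos ha]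
  rcases eq_or_ne N 0 with hN | hN
  · simp [ENNReal.iSup_eq_zero.1 hN, ENNReal.zero_rpow_of_pos hb]
  -- Normalize `f` and `g` to have supremum `1`, then use AM-GM.
  refine rpow_lintegral_mul_rpow_lintegral_le_of_const_mul ha.le hb.le (c := M⁻¹) (d := N⁻¹)
    (by simpa using hf_top) (by simpa using hM) (by simpa using hg_top) (by simpa using hN) ?_
  refine (ENNReal.rpow_mul_rpow_le_add ha hb hab _ _).trans <|
    ofReal_mul_lintegral_add_le_of_iSup_eq_one ha hb hab (hf.const_mul _) (hg.const_mul _)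
      (hh.const_mul _) ?_ ?_ fun x y => ?_
  · rw [← ENNReal.mul_iSup, ENNReal.inv_mul_cancel hM hf_top]
  · rw [← ENNReal.mul_iSup, ENNReal.inv_mul_cancel hN hg_top]
  · rw [ENNReal.mul_rpow_of_nonneg _ _ ha.le, ENNReal.mul_rpow_of_nonneg _ _ hb.le,
      mul_mul_mul_comm]
    gcongr
    exact hfgh x y

theorem hasPrekopaLeindler_volume : HasPrekopaLeindler (volume : Measure ℝ) := by
  intro a b ha hb hab f g h hf hg hh hfgh
  -- Truncate `f` and `g` at height `n` and pass to the limit by monotone convergence.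
  have htrunc : ∀ {u : ℝ → ℝ≥0∞}, Measurable u →
      ⨆ n : ℕ, ∫⁻ x, min (u x) n = ∫⁻ x, u x := fun hu => by
    rw [← lintegral_iSup (fun n => hu.min measurable_const)
      fun m n hmn x => min_le_min_left _ (Nat.cast_le.2 hmn)]
    congr with x
    rw [← inf_iSup_eq, ENNReal.iSup_natCast, inf_top_eq]
  have hmono : ∀ u : ℝ → ℝ≥0∞, Monotone fun n : ℕ => ∫⁻ x, min (u x) n :=
    fun u m n hmn => lintegral_mono fun x => min_le_min_left _ (Nat.cast_le.2 hmn)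
  rw [← htrunc hf, ← htrunc hg]
  refine ENNReal.iSup_rpow_mul_iSup_rpow_le (hmono f) (hmono g) ha hb fun n => ?_
  refine rpow_lintegral_mul_rpow_lintegral_le_of_iSup_ne_top ha hb hab
    (hf.min measurable_const) (hg.min measurable_const) hh
    (ne_top_of_le_ne_top (ENNReal.natCast_ne_top n) (iSup_le fun x => min_le_right _ _))
    (ne_top_of_le_ne_top (ENNReal.natCast_ne_top n) (iSup_le fun x => min_le_right _ _))
    fun x y => le_trans ?_ (hfgh x y)
  gcongr <;> exact min_le_left _ _

end Real

namespace HasPrekopaLeindler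

variable {E F : Type*} [MeasurableSpace E] [MeasurableSpace F] [AddCommMonoid E] [Module ℝ E]
  [AddCommMonoid F] [Module ℝ F]

theorem prod {μ : Measure E} {ν : Measure F} [SFinite ν] (hμ : HasPrekopaLeindler μ)
    (hν : HasPrekopaLeindler ν) : HasPrekopaLeindler (μ.prod ν) := by
  intro a b ha hb hab f g h hf hg hh hfgh
  rw [lintegral_prod f hf.aemeasurable, lintegral_prod g hg.aemeasurable,
    lintegral_prod h hh.aemeasurable]
  -- The inequality for `ν` on the fibres is the hypothesis for the `μ`-marginals.
  refine hμ ha hb hab hf.lintegral_prod_right' hg.lintegral_prod_right'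
    hh.lintegral_prod_right' fun x₁ x₂ => ?_
  exact hν ha hb hab (hf.comp measurable_prodMk_left) (hg.comp measurable_prodMk_left)
    (hh.comp measurable_prodMk_left) fun y₁ y₂ => hfgh (x₁, y₁) (x₂, y₂)

theorem map {μ : Measure E} (hμ : HasPrekopaLeindler μ) (e : E →ₗ[ℝ] F) (he : Measurable e) :
    HasPrekopaLeindler (μ.map e) := by
  intro a b ha hb hab f g h hf hg hh hfgh
  rw [lintegral_map hf he, lintegral_map hg he, lintegral_map hh he]
  refine hμ ha hb hab (hf.comp he) (hg.comp he) (hh.comp he) fun x y => ?_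
  simpa using hfgh (e x) (e y)

end HasPrekopaLeindler

theorem hasPrekopaLeindler_volume_pi (n : ℕ) :
    HasPrekopaLeindler (volume : Measure (Fin n → ℝ)) := by
  induction n with
  | zero =>
    intro a b ha hb hab f g h hf hg hh hfgh
    rw [volume_pi, Measure.pi_of_empty _ 0]
    simpa [Subsingleton.elim (a • (0 : Fin 0 → ℝ) + b • 0) 0] using hfgh 0 0
  | succ n ih =>
    let e := (MeasurableEquiv.piFinSuccAbove (fun _ : Fin (n + 1) => ℝ) 0).symm
    let eₗ : ℝ × (Fin n → ℝ) →ₗ[ℝ] Fin (n + 1) → ℝ :=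
      { toFun := e
        map_add' := fun x y => by ext i; refine Fin.cases ?_ ?_ i <;> simp [e]
        map_smul' := fun c x => by ext i; refine Fin.cases ?_ ?_ i <;> simp [e] }
    rw [← ((volume_preserving_piFinSuccAbove (fun _ => ℝ) 0).symm _).map_eq]
    exact (Real.hasPrekopaLeindler_volume.prod ih).map eₗ e.measurable

def IsLogConcave {E : Type*} [AddCommMonoid E] [Module ℝ E] (φ : E → ℝ≥0∞) : Prop :=
  ∀ ⦃a b : ℝ⦄, 0 < a → 0 < b → a + b = 1 → ∀ x y, φ x ^ a * φ y ^ b ≤ φ (a • x + b • y)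

namespace IsLogConcave

variable {E F : Type*} [AddCommMonoid E] [Module ℝ E] [AddCommMonoid F] [Module ℝ F]
  {φ : E → ℝ≥0∞}

theorem ofReal {f : E → ℝ} (hf₀ : ∀ x, 0 ≤ f x)
    (hf : ∀ x y : E, ∀ a b : ℝ, 0 ≤ a → 0 ≤ b → a + b = 1 →
      (f x) ^ a * (f y) ^ b ≤ f (a • x + b • y)) :
    IsLogConcave fun x => ENNReal.ofReal (f x) := by
  intro a b ha hb hab x y
  rw [ENNReal.ofReal_rpow_of_nonneg (hf₀ x) ha.le, ENNReal.ofReal_rpow_of_nonneg (hf₀ y) hb.le,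
    ← ENNReal.ofReal_mul (Real.rpow_nonneg (hf₀ x) a)]
  exact ENNReal.ofReal_le_ofReal (hf x y a b ha.le hb.le hab)

theorem comp_linearMap (hφ : IsLogConcave φ) (L : F →ₗ[ℝ] E) : IsLogConcave (φ ∘ L) := by
  intro a b ha hb hab x y
  simpa using hφ ha hb hab (L x) (L y)

theorem indicator (hφ : IsLogConcave φ) {K : Set E} (hK : Convex ℝ K) :
    IsLogConcave (K.indicator φ) := by
  intro a b ha hb hab x y
  by_cases hx : x ∈ K
  · by_cases hy : y ∈ K
    · simpa [hx, hy, hK hx hy ha.le hb.le hab] using hφ ha hb hab x y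
    · simp [hy, ENNReal.zero_rpow_of_pos hb]
  · simp [hx, ENNReal.zero_rpow_of_pos ha]

theorem toReal (hφ : IsLogConcave φ) (hφ_top : ∀ x, φ x ≠ ⊤) :
    ∀ x y : E, ∀ a b : ℝ, 0 ≤ a → 0 ≤ b → a + b = 1 →
      (φ x).toReal ^ a * (φ y).toReal ^ b ≤ (φ (a • x + b • y)).toReal := by
  intro x y a b ha hb hab
  rcases ha.eq_or_lt with rfl | ha
  · simp [show b = 1 by linarith]
  rcases hb.eq_or_lt with rfl | hb
  · simp [show a = 1 by linarith]
  rw [ENNReal.toReal_rpow, ENNReal.toReal_rpow, ← ENNReal.toReal_mul]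
  exact ENNReal.toReal_mono (hφ_top _) (hφ ha hb hab x y)

end IsLogConcave

theorem HasPrekopaLeindler.isLogConcave_lintegral {D E : Type*} [AddCommMonoid D] [Module ℝ D]
    [MeasurableSpace E] [AddCommMonoid E] [Module ℝ E] {μ : Measure E}
    (hμ : HasPrekopaLeindler μ) {φ : D × E → ℝ≥0∞} (hφm : ∀ d, Measurable fun x => φ (d, x))
    (hφ : IsLogConcave φ) : IsLogConcave fun d => ∫⁻ x, φ (d, x) ∂μ :=
  fun _ _ ha hb hab d d' =>
    hμ ha hb hab (hφm d) (hφm d') (hφm _) fun x y => hφ ha hb hab (d, x) (d', y)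

theorem convex_setOf_le_of_rpow_mul_rpow_le {E : Type*} [AddCommMonoid E] [Module ℝ E]
    {p : E → ℝ} (hp : ∀ x y : E, ∀ a b : ℝ, 0 ≤ a → 0 ≤ b → a + b = 1 →
      (p x) ^ a * (p y) ^ b ≤ p (a • x + b • y)) {c : ℝ} (hc : 0 ≤ c) :
    Convex ℝ {x | c ≤ p x} := by
  intro x hx y hy a b ha hb hab
  calc c = c ^ a * c ^ b := by
        rw [← Real.rpow_add' hc (by simp [hab]), hab, Real.rpow_one]
    _ ≤ p x ^ a * p y ^ b := by
        gcongr
        · exact Real.rpow_nonneg (hc.trans hx) a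
        · exact hx
        · exact hy
    _ ≤ p (a • x + b • y) := hp x y a b ha hb hab

theorem measure_prodMk_mem_eq_lintegral_indicator {Ω D E : Type*} [MeasurableSpace Ω]
    [MeasurableSpace D] [MeasurableSpace E] {P : Measure Ω} {μ : Measure E} {w : Ω → E}
    (hw : Measurable w) {f : E → ℝ≥0∞} (hlaw : P.map w = μ.withDensity f)
    {K : Set (D × E)} (hK : MeasurableSet K) (d : D) :
    P {ω | (d, w ω) ∈ K} = ∫⁻ x, K.indicator (fun p => f p.2) (d, x) ∂μ := by
  have hKd : MeasurableSet (Prod.mk d ⁻¹' K) := measurable_prodMk_left hK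
  rw [show {ω | (d, w ω) ∈ K} = w ⁻¹' (Prod.mk d ⁻¹' K) from rfl, ← Measure.map_apply hw hKd,
    hlaw, withDensity_apply _ hKd, ← lintegral_indicator hKd]
  rfl

/-- Prékopa-type result: if the `gᵢ` are quasi-convex and `w` has a log-concave
probability density `f`, then `p(d) = P(g₁(d,w) ≤ 0, …, g_r(d,w) ≤ 0)` is
log-concave in `d`, and consequently for every `α ∈ (0,1)` the set
`{d : p(d) ≥ 1 − α}` is convex. -/
theorem prob_logConcave_and_constraint_set_convex
    {Ω : Type*} [MeasurableSpace Ω] (P : Measure Ω) [IsProbabilityMeasure P]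
    {k l r : ℕ}
    (g : Fin r → (Fin k → ℝ) × (Fin l → ℝ) → ℝ)
    (hgqc : ∀ i, QuasiconvexOn ℝ Set.univ (g i))
    (hgmeas : ∀ i, Measurable (g i))
    (w : Ω → Fin l → ℝ) (hw : Measurable w)
    (f : (Fin l → ℝ) → ℝ) (hf0 : ∀ x, 0 ≤ f x) (hfmeas : Measurable f)
    (hflc : ∀ x y : Fin l → ℝ, ∀ a b : ℝ, 0 ≤ a → 0 ≤ b → a + b = 1 →
      (f x) ^ a * (f y) ^ b ≤ f (a • x + b • y))
    (hlaw : Measure.map w P = volume.withDensity (fun x => ENNReal.ofReal (f x))) :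
    (∀ d d' : Fin k → ℝ, ∀ a b : ℝ, 0 ≤ a → 0 ≤ b → a + b = 1 →
        (ccProb P g w d) ^ a * (ccProb P g w d') ^ b ≤ ccProb P g w (a • d + b • d')) ∧
      (∀ α ∈ Set.Ioo (0:ℝ) 1, Convex ℝ {d : Fin k → ℝ | 1 - α ≤ ccProb P g w d}) := by
  set K : Set ((Fin k → ℝ) × (Fin l → ℝ)) := {p | ∀ i, g i p ≤ 0}
  have hK : Convex ℝ K := by
    simpa only [K, ofPred_forall] using convex_iInter fun i => by simpa using hgqc i 0
  have hKm : MeasurableSet K := by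
    simpa only [K, ofPred_forall] using
      MeasurableSet.iInter fun i => measurableSet_le (hgmeas i) measurable_const
  set φ := K.indicator fun p => ENNReal.ofReal (f p.2)
  have hφm : Measurable φ := (hfmeas.comp measurable_snd).ennreal_ofReal.indicator hKm
  have hp : ∀ d, P {ω | ∀ i, g i (d, w ω) ≤ 0} = ∫⁻ x, φ (d, x) :=
    measure_prodMk_mem_eq_lintegral_indicator hw hlaw hKm
  have hmarg : IsLogConcave fun d => ∫⁻ x, φ (d, x) :=
    (hasPrekopaLeindler_volume_pi l).isLogConcave_lintegral
      (fun d => hφm.comp measurable_prodMk_left)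
      (((IsLogConcave.ofReal hf0 hflc).comp_linearMap (LinearMap.snd ℝ _ _)).indicator hK)
  have hlc := hmarg.toReal fun d => hp d ▸ measure_ne_top P _
  simp only [← hp] at hlc
  exact ⟨hlc, fun α hα => convex_setOf_le_of_rpow_mul_rpow_le hlc (by linarith [hα.2])⟩
end
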